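/- Let K ⊆ ℝ_max^n be a closed semimodule, A ∈ ℝ_max^{n×n}, B ∈ ℝ_max^{n×q}. Define φ(X) := K ∩ A^{-1}(X ⊕ Im B), the sequence X_1 := K, X_{k+1} := φ(X_k), and K^∞ := ⋂_{k∈ℕ} X_k. Then K^∞ is the maximal (A,B)-controlled invariant semimodule contained in K: K^∞ is (A,B)-controlled invariant, is contained in K, and contains every (A,B)-controlled invariant semimodule contained in K. Moreover, K^∞ is closed. -/

import Mathlib

/-!
Max-plus (tropical) framework.

The max-plus semiring `ℝ_max = ℝ ∪ {-∞}` is modelled as `WithBot ℝ`: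
max-plus addition `a ⊕ b = max a b` is the lattice `⊔`, and max-plus
multiplication `a ⊙ b = a + b` is `+` (with `⊥ = -∞` absorbing).
The topology induced by the metric `d(a,b) = |exp a - exp b|` is the
order topology.
-/

/-- The max-plus semiring `ℝ ∪ {-∞}`. -/
abbrev Rmax : Type := WithBot ℝ

/-- The topology of `ℝ_max` (the order topology, which coincides with the
topology induced by the metric `d(a,b) = |exp a - exp b|`). -/
instance : TopologicalSpace Rmax := Preorder.topology Rmax

instance : OrderTopology Rmax := ⟨rfl⟩

/-- Vectors with entries in a (max-plus-like) semiring `R`. -/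
abbrev Vec (R : Type*) (n : ℕ) := Fin n → R

section Defs

variable {R : Type*} [LinearOrder R] [Add R] [OrderBot R]

/-- Max-plus scalar action on a vector: `(λ x)_i = λ ⊙ x_i = λ + x_i`. -/
def sm {n : ℕ} (lam : R) (x : Vec R n) : Vec R n := fun i => lam + x i

/-- Max-plus matrix-vector product: `(A x)_i = ⊕_k A_{ik} ⊙ x_k = max_k (A_{ik} + x_k)`. -/
def mulVecMP {m n : ℕ} (A : Matrix (Fin m) (Fin n) R) (x : Vec R n) : Vec R m :=
  fun i => Finset.univ.sup fun k => A i k + x k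

/-- A subsemimodule (max-plus cone) of `R^n`: a subset stable under
max-plus linear combinations `λ x ⊕ μ y`. -/
def IsSemimodule {n : ℕ} (K : Set (Vec R n)) : Prop :=
  ∀ x ∈ K, ∀ y ∈ K, ∀ lam mu : R, (sm lam x ⊔ sm mu y) ∈ K

/-- Max-plus scalar action on a pair of vectors. -/
def smP {n : ℕ} (lam : R) (p : Vec R n × Vec R n) : Vec R n × Vec R n :=
  (sm lam p.1, sm lam p.2)

/-- A subsemimodule of `(R^n)²`. -/
def IsPairSemimodule {n : ℕ} (W : Set (Vec R n × Vec R n)) : Prop :=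
  ∀ p ∈ W, ∀ q ∈ W, ∀ lam mu : R, (smP lam p ⊔ smP mu q) ∈ W

/-- A congruence on `R^n`: an equivalence relation which is a
subsemimodule of `(R^n)²`. -/
def IsCongruence {n : ℕ} (W : Set (Vec R n × Vec R n)) : Prop :=
  Equivalence (fun x y => (x, y) ∈ W) ∧ IsPairSemimodule W

/-- The (max-plus) kernel of a matrix: `ker E = {(x,y) : E x = E y}`. -/
def kerM {p n : ℕ} (E : Matrix (Fin p) (Fin n) R) : Set (Vec R n × Vec R n) :=
  {w | mulVecMP E w.1 = mulVecMP E w.2}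

/-- The image of a matrix: `Im E = {E x}`. -/
def imM {n q : ℕ} (E : Matrix (Fin n) (Fin q) R) : Set (Vec R n) :=
  {y | ∃ x : Vec R q, y = mulVecMP E x}

/-- `A W = {(A x, A y) : (x,y) ∈ W}` for a set of pairs `W`. -/
def mapCong {n : ℕ} (A : Matrix (Fin n) (Fin n) R) (W : Set (Vec R n × Vec R n)) :
    Set (Vec R n × Vec R n) :=
  {p | ∃ w ∈ W, p = (mulVecMP A w.1, mulVecMP A w.2)}

/-- `A S = {A x : x ∈ S}`. -/
def mapSet {n : ℕ} (A : Matrix (Fin n) (Fin n) R) (S : Set (Vec R n)) : Set (Vec R n) :=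
  {y | ∃ x ∈ S, y = mulVecMP A x}

/-- `A⁻¹ S = {x : A x ∈ S}`. -/
def invSet {n : ℕ} (A : Matrix (Fin n) (Fin n) R) (S : Set (Vec R n)) : Set (Vec R n) :=
  {x | mulVecMP A x ∈ S}

/-- `A⁻¹ U = {(x,y) : (A x, A y) ∈ U}` for a set of pairs `U`. -/
def invPair {n : ℕ} (A : Matrix (Fin n) (Fin n) R) (U : Set (Vec R n × Vec R n)) :
    Set (Vec R n × Vec R n) :=
  {p | (mulVecMP A p.1, mulVecMP A p.2) ∈ U}

/-- The max-plus sum of two subsets of `R^n`: `X ⊕ Y = {x ⊕ y : x ∈ X, y ∈ Y}`. -/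
def setSum {n : ℕ} (X Y : Set (Vec R n)) : Set (Vec R n) :=
  {z | ∃ x ∈ X, ∃ y ∈ Y, z = x ⊔ y}

/-- The max-plus sum of two subsets of `(R^n)²`. -/
def pairSum {n : ℕ} (X Y : Set (Vec R n × Vec R n)) : Set (Vec R n × Vec R n) :=
  {z | ∃ x ∈ X, ∃ y ∈ Y, z = x ⊔ y}

/-- `W` is `(C,A)`-conditioned invariant: `A (W ∩ ker C) ⊆ W`. -/
def CondInv {n q : ℕ} (C : Matrix (Fin q) (Fin n) R) (A : Matrix (Fin n) (Fin n) R)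
    (W : Set (Vec R n × Vec R n)) : Prop :=
  mapCong A (W ∩ kerM C) ⊆ W

/-- `X` is `(A,B)`-controlled invariant: `A X ⊆ X ⊕ Im B`. -/
def ContrInv {n q : ℕ} (A : Matrix (Fin n) (Fin n) R) (B : Matrix (Fin n) (Fin q) R)
    (X : Set (Vec R n)) : Prop :=
  mapSet A X ⊆ setSum X (imM B)

/-- The max-plus scalar product `uᵗ v = ⊕_i u_i ⊙ v_i = max_i (u_i + v_i)`. -/
def dotMP {n : ℕ} (u v : Vec R n) : R := Finset.univ.sup fun i => u i + v i

/-- The orthogonal of a semimodule `X ⊆ R^n`: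
`X^⊥ = {(x,y) : xᵗ z = yᵗ z, ∀ z ∈ X}`. -/
def orthS {n : ℕ} (X : Set (Vec R n)) : Set (Vec R n × Vec R n) :=
  {p | ∀ z ∈ X, dotMP p.1 z = dotMP p.2 z}

/-- The orthogonal of a congruence (or set of pairs) `W ⊆ (R^n)²`:
`W^⊤ = {z : xᵗ z = yᵗ z, ∀ (x,y) ∈ W}`. -/
def orthC {n : ℕ} (W : Set (Vec R n × Vec R n)) : Set (Vec R n) :=
  {z | ∀ p ∈ W, dotMP p.1 z = dotMP p.2 z}

/-- The smallest congruence containing a set `S ⊆ (R^n)²`. -/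
def spanCong {n : ℕ} (S : Set (Vec R n × Vec R n)) : Set (Vec R n × Vec R n) :=
  ⋂₀ {W | IsCongruence W ∧ S ⊆ W}

/-- The smallest semimodule containing a set `S ⊆ R^n`. -/
def spanSet {n : ℕ} (S : Set (Vec R n)) : Set (Vec R n) :=
  ⋂₀ {K | IsSemimodule K ∧ S ⊆ K}

end Defs

open Set Filter Topology
open scoped SetFamily

/-!
The sets `X_k` decrease because `φ` is monotone, and by induction each of them is a closed
semimodule containing every controlled invariant `X ⊆ K`. Closedness rests on two facts: `X ⊕ Y`
is closed for closed `X` and `Y`, since below any bound `c` it is the image of the compact set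
`(X ∩ Iic c) × (Y ∩ Iic c)`; and `Im B` is closed, being the fixed-point set of the continuous map
`z ↦ B (B♯ z)`.

For controlled invariance, let `x ∈ K^∞`, so that `Ax ∈ X_k ⊕ Im B` for every `k`. The largest
element `w = B (B♯ (Ax))` of `Im B` below `Ax` can serve as the `Im B` part for all `k` at once, so
the sets `{v ∈ X_k | v ⊕ w = Ax}` are nonempty, closed, decreasing and bounded above by `Ax`, hence
compact; by Cantor's intersection theorem they have a common point.
-/

section Algebra

variable {R : Type*} [LinearOrder R] {n : ℕ}

lemma setSum_eq_sups (X Y : Set (Vec R n)) : setSum X Y = X ⊻ Y := by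
  ext z
  simp only [setSum, mem_ofPred_eq, mem_sups, eq_comm]

variable [Add R]

lemma isSemimodule_inter {S T : Set (Vec R n)} (hS : IsSemimodule S) (hT : IsSemimodule T) :
    IsSemimodule (S ∩ T) :=
  fun x hx y hy lam mu => ⟨hS x hx.1 y hy.1 lam mu, hT x hx.2 y hy.2 lam mu⟩

lemma isSemimodule_iInter {ι : Sort*} {S : ι → Set (Vec R n)} (h : ∀ i, IsSemimodule (S i)) :
    IsSemimodule (⋂ i, S i) := fun x hx y hy lam mu =>
  mem_iInter.2 fun i => h i x (mem_iInter.1 hx i) y (mem_iInter.1 hy i) lam mu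

variable [AddLeftMono R]

lemma sm_sup (lam : R) (x y : Vec R n) : sm lam (x ⊔ y) = sm lam x ⊔ sm lam y :=
  funext fun i => (max_add_add_left lam (x i) (y i)).symm

lemma isSemimodule_sups {X Y : Set (Vec R n)} (hX : IsSemimodule X) (hY : IsSemimodule Y) :
    IsSemimodule (X ⊻ Y) := by
  rintro _ ⟨x, hx, y, hy, rfl⟩ _ ⟨x', hx', y', hy', rfl⟩ lam mu
  refine ⟨_, hX x hx x' hx' lam mu, _, hY y hy y' hy' lam mu, ?_⟩
  rw [sm_sup, sm_sup, sup_sup_sup_comm]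

lemma mulVecMP_sup [OrderBot R] {m : ℕ} (A : Matrix (Fin m) (Fin n) R) (x y : Vec R n) :
    mulVecMP A (x ⊔ y) = mulVecMP A x ⊔ mulVecMP A y := by
  funext i
  simp only [mulVecMP, Pi.sup_apply, ← Finset.sup_sup, ← max_add_add_left]
  rfl

end Algebra

lemma mulVecMP_sm {m n : ℕ} (A : Matrix (Fin m) (Fin n) Rmax) (lam : Rmax) (x : Vec Rmax n) :
    mulVecMP A (sm lam x) = sm lam (mulVecMP A x) := by
  funext i
  simp only [mulVecMP, sm]
  rw [Finset.apply_sup_eq_sup_comp_of_linearOrder (lam + ·) (fun _ _ h => add_le_add_right h lam)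
    (WithBot.add_bot lam)]
  exact Finset.sup_congr rfl fun j _ => add_left_comm _ _ _

lemma isSemimodule_imM {n q : ℕ} (B : Matrix (Fin n) (Fin q) Rmax) : IsSemimodule (imM B) := by
  rintro _ ⟨u, rfl⟩ _ ⟨v, rfl⟩ lam mu
  exact ⟨sm lam u ⊔ sm mu v, by rw [mulVecMP_sup, mulVecMP_sm, mulVecMP_sm]⟩

lemma isSemimodule_invSet {n : ℕ} (A : Matrix (Fin n) (Fin n) Rmax) {S : Set (Vec Rmax n)}
    (hS : IsSemimodule S) : IsSemimodule (invSet A S) := by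
  intro x hx y hy lam mu
  simp only [invSet, mem_ofPred_eq, mulVecMP_sup, mulVecMP_sm]
  exact hS _ hx _ hy lam mu

section Iteration

variable {α : Type*} [SemilatticeInf α] {K : α} {F : α → α} {X : ℕ → α}

lemma antitone_of_succ_eq_inf (hF : Monotone F) (h0 : X 0 = K)
    (hstep : ∀ k, X (k + 1) = K ⊓ F (X k)) : Antitone X := by
  refine antitone_nat_of_succ_le fun k => ?_
  induction k with
  | zero => rw [hstep, h0]; exact inf_le_left
  | succ k ih =>
    calc X (k + 2) = K ⊓ F (X (k + 1)) := hstep _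
      _ ≤ K ⊓ F (X k) := inf_le_inf_left K (hF ih)
      _ = X (k + 1) := (hstep k).symm

lemma le_of_succ_eq_inf (hF : Monotone F) (h0 : X 0 = K)
    (hstep : ∀ k, X (k + 1) = K ⊓ F (X k)) {Y : α} (hYK : Y ≤ K) (hYF : Y ≤ F Y) (k : ℕ) :
    Y ≤ X k := by
  induction k with
  | zero => rwa [h0]
  | succ k ih => rw [hstep]; exact le_inf hYK (hYF.trans (hF ih))

end Iteration

lemma Set.sups_inter_Iic {α : Type*} [SemilatticeSup α] (X Y : Set α) (c : α) :
    X ⊻ Y ∩ Iic c = (X ∩ Iic c) ⊻ (Y ∩ Iic c) := by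
  ext z
  constructor
  · rintro ⟨⟨x, hx, y, hy, rfl⟩, hc⟩
    exact ⟨x, ⟨hx, le_sup_left.trans hc⟩, y, ⟨hy, le_sup_right.trans hc⟩, rfl⟩
  · rintro ⟨x, hx, y, hy, rfl⟩
    exact ⟨⟨x, hx.1, y, hy.1, rfl⟩, sup_le hx.2 hy.2⟩

instance Pi.continuousSup {ι : Type*} {π : ι → Type*} [∀ i, TopologicalSpace (π i)]
    [∀ i, Max (π i)] [∀ i, ContinuousSup (π i)] : ContinuousSup (∀ i, π i) where
  continuous_sup := continuous_pi fun i =>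
    ((continuous_apply i).comp continuous_fst).sup ((continuous_apply i).comp continuous_snd)

lemma IsCompact.sups {α : Type*} [SemilatticeSup α] [TopologicalSpace α] [ContinuousSup α]
    {X Y : Set α} (hX : IsCompact X) (hY : IsCompact Y) : IsCompact (X ⊻ Y) := by
  change IsCompact (image2 (· ⊔ ·) X Y)
  rw [← image_uncurry_prod]
  exact (hX.prod hY).image continuous_sup

lemma isCompact_Iic {α : Type*} [Preorder α] [OrderBot α] [TopologicalSpace α]
    [CompactIccSpace α] (c : α) : IsCompact (Iic c) :=
  Icc_bot (a := c) ▸ isCompact_Icc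

section Topology

lemma Rmax.continuous_const_add (c : Rmax) : Continuous (c + ·) := by
  induction c using WithBot.recBotCoe with
  | bot => simpa using continuous_const (y := (⊥ : Rmax))
  | coe r =>
    convert (OrderIso.withBotCongr (OrderIso.addLeft r)).continuous using 1
    funext z
    induction z using WithBot.recBotCoe <;> rfl

lemma Rmax.continuous_map_sub (b : ℝ) : Continuous (WithBot.map (· - b)) :=
  (OrderIso.withBotCongr (OrderIso.subRight b)).continuous

variable {n : ℕ}

lemma continuous_mulVecMP {m : ℕ} (A : Matrix (Fin m) (Fin n) Rmax) : Continuous (mulVecMP A) :=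
  continuous_pi fun i => Continuous.finset_sup_apply fun j _ =>
    (Rmax.continuous_const_add (A i j)).comp (continuous_apply j)

lemma isClosed_of_forall_isClosed_inter_Iic {s : Set (Vec Rmax n)}
    (h : ∀ c, IsClosed (s ∩ Iic c)) : IsClosed s := by
  refine isClosed_of_closure_subset fun z hz => ?_
  choose c hc using fun i => exists_gt (z i)
  have hzc : z ∈ closure (s ∩ Iic c) := mem_closure_iff_frequently.2 <|
    (mem_closure_iff_frequently.1 hz).and_eventually (pi_Iic_mem_nhds' hc)
  exact ((h c).closure_subset hzc).1

lemma isClosed_sups {X Y : Set (Vec Rmax n)} (hX : IsClosed X) (hY : IsClosed Y) :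
    IsClosed (X ⊻ Y) :=
  isClosed_of_forall_isClosed_inter_Iic fun c => by
    rw [Set.sups_inter_Iic]
    exact (((isCompact_Iic c).inter_left hX).sups ((isCompact_Iic c).inter_left hY)).isClosed

end Topology

lemma Rmax.coe_add_le_iff_le_map_sub (b : ℝ) (t z : Rmax) :
    (b : Rmax) + t ≤ z ↔ t ≤ z.map (· - b) := by
  induction t using WithBot.recBotCoe with
  | bot => simp
  | coe t =>
    induction z using WithBot.recBotCoe with
    | bot => simp [← WithBot.coe_add]
    | coe z =>
      rw [← WithBot.coe_add, WithBot.map_coe, WithBot.coe_le_coe, WithBot.coe_le_coe]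
      constructor <;> intro h <;> linarith

section Residual

variable {n q : ℕ} (B : Matrix (Fin n) (Fin q) Rmax)

/-- The residuation `B♯ z`, whose `j`-th entry is the largest `t` with `B i j + t ≤ z i` for all
`i`; on a zero column of `B` no such largest `t` exists and the entry is set to `⊥`. -/
noncomputable def maxPlusResidual (z : Vec Rmax n) : Vec Rmax q := fun j =>
  if h : (Finset.univ.filter fun i => B i j ≠ ⊥).Nonempty then
    (Finset.univ.filter fun i => B i j ≠ ⊥).inf' h fun i => (z i).map (· - (B i j).unbotD 0)
  else ⊥

lemma le_maxPlusResidual_apply_iff {z : Vec Rmax n} {i₀ : Fin n} {j : Fin q} (hB : B i₀ j ≠ ⊥)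
    {t : Rmax} : t ≤ maxPlusResidual B z j ↔ ∀ i, B i j + t ≤ z i := by
  have hne : (Finset.univ.filter fun i => B i j ≠ ⊥).Nonempty := ⟨i₀, by simpa using hB⟩
  rw [maxPlusResidual, dif_pos hne, Finset.le_inf'_iff]
  refine forall_congr' fun i => ?_
  induction hb : B i j using WithBot.recBotCoe with
  | bot => simp [hb]
  | coe b => simp [hb, Rmax.coe_add_le_iff_le_map_sub]

lemma mulVecMP_maxPlusResidual_le (z : Vec Rmax n) : mulVecMP B (maxPlusResidual B z) ≤ z :=
  fun i => Finset.sup_le fun j _ => by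
    by_cases hb : B i j = ⊥
    · simp [hb]
    · exact (le_maxPlusResidual_apply_iff B hb).1 le_rfl i

lemma mulVecMP_le_mulVecMP_maxPlusResidual {u : Vec Rmax q} {z : Vec Rmax n}
    (h : mulVecMP B u ≤ z) : mulVecMP B u ≤ mulVecMP B (maxPlusResidual B z) := fun i =>
  Finset.sup_mono_fun fun j _ => by
    by_cases hb : B i j = ⊥
    · simp [hb]
    · refine add_le_add_right ((le_maxPlusResidual_apply_iff B hb).2 fun i' => ?_) _
      exact (Finset.le_sup (f := fun j => B i' j + u j) (Finset.mem_univ j)).trans (h i')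

lemma continuous_maxPlusResidual : Continuous (maxPlusResidual B) := by
  refine continuous_pi fun j => ?_
  by_cases h : (Finset.univ.filter fun i => B i j ≠ ⊥).Nonempty
  · simp only [maxPlusResidual, dif_pos h]
    exact Continuous.finset_inf'_apply h fun i _ =>
      (Rmax.continuous_map_sub _).comp (continuous_apply i)
  · simp only [maxPlusResidual, dif_neg h]
    exact continuous_const

lemma imM_eq_setOf_mulVecMP_maxPlusResidual_eq :
    imM B = {z | mulVecMP B (maxPlusResidual B z) = z} := by
  ext z
  refine ⟨?_, fun h => ⟨maxPlusResidual B z, h.symm⟩⟩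
  rintro ⟨u, rfl⟩
  exact le_antisymm (mulVecMP_maxPlusResidual_le B _)
    (mulVecMP_le_mulVecMP_maxPlusResidual B le_rfl)

lemma isClosed_imM : IsClosed (imM B) := by
  rw [imM_eq_setOf_mulVecMP_maxPlusResidual_eq]
  exact isClosed_eq ((continuous_mulVecMP B).comp (continuous_maxPlusResidual B)) continuous_id

lemma sup_mulVecMP_maxPlusResidual_eq {v z : Vec Rmax n} {u : Vec Rmax q}
    (h : v ⊔ mulVecMP B u = z) : v ⊔ mulVecMP B (maxPlusResidual B z) = z := by
  refine le_antisymm (sup_le (h ▸ le_sup_left) (mulVecMP_maxPlusResidual_le B z)) ?_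
  calc z = v ⊔ mulVecMP B u := h.symm
    _ ≤ v ⊔ mulVecMP B (maxPlusResidual B z) :=
      sup_le_sup_left (mulVecMP_le_mulVecMP_maxPlusResidual B (h ▸ le_sup_right)) v

end Residual

section ControlledInvariance

variable {n q : ℕ} (A : Matrix (Fin n) (Fin n) Rmax) (B : Matrix (Fin n) (Fin q) Rmax)

lemma iInter_sups_imM_subset {X : ℕ → Set (Vec Rmax n)} (hX : Antitone X)
    (hXc : ∀ k, IsClosed (X k)) : ⋂ k, X k ⊻ imM B ⊆ (⋂ k, X k) ⊻ imM B := by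
  intro z hz
  set w := mulVecMP B (maxPlusResidual B z)
  let S k := X k ∩ {v | v ⊔ w = z}
  have hS_nonempty : ∀ k, (S k).Nonempty := fun k => by
    obtain ⟨v, hv, _, ⟨u, rfl⟩, h⟩ := mem_iInter.1 hz k
    exact ⟨v, hv, sup_mulVecMP_maxPlusResidual_eq B h⟩
  have hS_closed : ∀ k, IsClosed (S k) := fun k =>
    (hXc k).inter (isClosed_eq (continuous_id.sup continuous_const) continuous_const)
  have hS_compact : IsCompact (S 0) :=
    (isCompact_Iic z).of_isClosed_subset (hS_closed 0) fun v hv =>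
      hv.2 ▸ (le_sup_left : v ≤ v ⊔ w)
  obtain ⟨v, hv⟩ := hS_compact.nonempty_iInter_of_sequence_nonempty_isCompact_isClosed S
    (fun k => inter_subset_inter_left _ (hX k.le_succ)) hS_nonempty hS_closed
  exact ⟨v, mem_iInter.2 fun k => (mem_iInter.1 hv k).1, w, ⟨_, rfl⟩, (mem_iInter.1 hv 0).2⟩

lemma monotone_invSet_setSum_imM : Monotone fun X => invSet A (setSum X (imM B)) :=
  fun _ _ h => preimage_mono (f := mulVecMP A) <| by
    simp only [setSum_eq_sups]; exact sups_subset_right h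

lemma contrInv_iff_subset_invSet (X : Set (Vec Rmax n)) :
    ContrInv A B X ↔ X ⊆ invSet A (setSum X (imM B)) := by
  simp only [ContrInv, mapSet, invSet, subset_def, mem_ofPred_eq, forall_exists_index, and_imp]
  exact ⟨fun h x hx => h _ x hx rfl, fun h _ x hx e => e ▸ h x hx⟩

lemma isSemimodule_invSet_setSum_imM {X : Set (Vec Rmax n)} (hX : IsSemimodule X) :
    IsSemimodule (invSet A (setSum X (imM B))) := by
  rw [setSum_eq_sups]
  exact isSemimodule_invSet A (isSemimodule_sups hX (isSemimodule_imM B))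

lemma isClosed_invSet_setSum_imM {X : Set (Vec Rmax n)} (hX : IsClosed X) :
    IsClosed (invSet A (setSum X (imM B))) := by
  rw [setSum_eq_sups]
  exact (isClosed_sups hX (isClosed_imM B)).preimage (continuous_mulVecMP A)

end ControlledInvariance

/-- For a closed semimodule `K`, with `φ(X) = K ∩ A⁻¹(X ⊕ Im B)`,
`X_1 = K`, `X_{k+1} = φ(X_k)`, the set `K^∞ = ⋂_k X_k` is the maximal
`(A,B)`-controlled invariant semimodule contained in `K`, and it is closed. -/
theorem Kinfty_is_maximal_controlled_invariant
    {n q : ℕ} (A : Matrix (Fin n) (Fin n) Rmax) (B : Matrix (Fin n) (Fin q) Rmax)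
    (K : Set (Vec Rmax n)) (hK : IsSemimodule K) (hKc : IsClosed K)
    (Xseq : ℕ → Set (Vec Rmax n))
    (h0 : Xseq 0 = K)
    (hstep : ∀ k, Xseq (k + 1) = K ∩ invSet A (setSum (Xseq k) (imM B))) :
    IsSemimodule (⋂ k, Xseq k) ∧ ContrInv A B (⋂ k, Xseq k) ∧ (⋂ k, Xseq k) ⊆ K ∧
      (∀ X : Set (Vec Rmax n), IsSemimodule X → ContrInv A B X → X ⊆ K →
        X ⊆ ⋂ k, Xseq k) ∧
      IsClosed (⋂ k, Xseq k) := by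
  have hF := monotone_invSet_setSum_imM A B
  have hXseq : ∀ k, IsSemimodule (Xseq k) ∧ IsClosed (Xseq k) := by
    intro k
    induction k with
    | zero => exact h0 ▸ ⟨hK, hKc⟩
    | succ k ih =>
      rw [hstep]
      exact ⟨isSemimodule_inter hK (isSemimodule_invSet_setSum_imM A B ih.1),
        hKc.inter (isClosed_invSet_setSum_imM A B ih.2)⟩
  refine ⟨isSemimodule_iInter fun k => (hXseq k).1, ?_, h0 ▸ iInter_subset Xseq 0,
    fun X _ hXA hXK => subset_iInter <|
      le_of_succ_eq_inf hF h0 hstep hXK ((contrInv_iff_subset_invSet A B X).1 hXA),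
    isClosed_iInter fun k => (hXseq k).2⟩
  rw [contrInv_iff_subset_invSet]
  intro x hx
  have hAx : ∀ k, mulVecMP A x ∈ Xseq k ⊻ imM B := fun k => by
    have hx' := mem_iInter.1 hx (k + 1)
    rw [hstep] at hx'
    exact setSum_eq_sups (Xseq k) (imM B) ▸ hx'.2
  rw [invSet, mem_ofPred_eq, setSum_eq_sups]
  exact iInter_sups_imM_subset B (antitone_of_succ_eq_inf hF h0 hstep)
    (fun k => (hXseq k).2) (mem_iInter.2 hAx)
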